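/- For every P ≥ 2 and every integer n > 2, β_P(n) = ∏_{p ≤ P} β_{(p)}(n), the product running over primes p ≤ P. -/

import Mathlib

open Filter Finset
open scoped Classical Topology

noncomputable section

/-- `d` is a positive non-square discriminant. -/
def IsDisc (d : ℕ) : Prop := 0 < d ∧ (d % 4 = 0 ∨ d % 4 = 1) ∧ ¬ IsSquare d

/-- The value of `χ_d` at a prime `p`. -/
def chiP (d p : ℕ) : ℤ :=
  if p = 2 then (if d % 8 = 1 then 1 else if d % 8 = 5 then -1 else 0)
  else if p ∣ d then 0
  else if ∃ x : ZMod p, x ^ 2 = (d : ZMod p) then 1 else -1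

/-- The completely multiplicative function `χ_d` (on the positive integers). -/
def chiFn (d m : ℕ) : ℤ := if m = 0 then 0 else m.factorization.prod fun p k => chiP d p ^ k

/-- `L(1, χ_d)`, defined as the limit of the partial sums `Σ_{1 ≤ n ≤ N} χ_d(n)/n`. -/
def Lval (d : ℕ) : ℝ := limUnder atTop fun N : ℕ => ∑ n ∈ Finset.Icc 1 N, (chiFn d n : ℝ) / n

/-- `β(n) = Σ_{d,v ≥ 1 : d v² = n² - 4} L(1,χ_d)/v` for `n > 2`, and `0` for `n ≤ 2`. -/
def betaFn (n : ℕ) : ℝ :=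
  if 2 < n then
    ∑ᶠ dv ∈ {dv : ℕ × ℕ | IsDisc dv.1 ∧ 0 < dv.2 ∧ dv.1 * dv.2 ^ 2 = n ^ 2 - 4},
      Lval dv.1 / dv.2
  else 0

/-- The primes `p` with `p ≤ P`. -/
def primesLe (P : ℝ) : Finset ℕ := (Finset.range (⌊P⌋₊ + 1)).filter Nat.Prime

/-- `β_P(n)` for `n > 2`, and `0` for `n ≤ 2`. -/
def betaPFn (P : ℝ) (n : ℕ) : ℝ :=
  if 2 < n then
    ∑ᶠ dv ∈ {dv : ℕ × ℕ | IsDisc dv.1 ∧ 0 < dv.2 ∧ dv.1 * dv.2 ^ 2 = n ^ 2 - 4 ∧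
        ∀ p : ℕ, p.Prime → p ∣ dv.2 → (p : ℝ) ≤ P},
      (1 / dv.2 : ℝ) * ∏ p ∈ primesLe P, (1 - (chiFn dv.1 p : ℝ) / p)⁻¹
  else 0

/-- The condition `I_{p^b}(n) = 1`: `p^{2b} ∣ n² - 4` and, in case `p = 2`,
`(n²-4)·2^{-2b} ≡ 0 or 1 (mod 4)`. -/
def Icond (p b n : ℕ) : Prop :=
  p ^ (2 * b) ∣ n ^ 2 - 4 ∧
    (p = 2 → (n ^ 2 - 4) / 2 ^ (2 * b) % 4 = 0 ∨ (n ^ 2 - 4) / 2 ^ (2 * b) % 4 = 1)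

/-- `β_{(p)}(n) = Σ_{b ≥ 0} p^{-b} (1 - χ_{(n²-4)p^{-2b}}(p)/p)⁻¹ I_{p^b}(n)` for `n > 2`. -/
def betaLoc (p n : ℕ) : ℝ :=
  if 2 < n then
    ∑' b : ℕ, if Icond p b n then
      (1 / (p : ℝ) ^ b) * (1 - (chiFn ((n ^ 2 - 4) / p ^ (2 * b)) p : ℝ) / p)⁻¹ else 0
  else 0

/-! Both sides are finite sums. Expanding the product of the local series gives a sum over the
`P`-smooth `v = ∏ p ^ b_p` with `I_{p^{b_p}}(n) = 1` for all `p ≤ P`. Together these conditions say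
exactly that `d = (n² - 4) / v²` is a discriminant (the one at `p = 2` because an odd square is
`1 mod 8`), and then `χ_{(n²-4)/p^{2 b_p}}(p) = χ_d(p)`, since the two arguments differ by the
square of a number prime to `p`. -/

theorem Nat.mem_of_prime_dvd_prod_pow {p k : ℕ} {S : Finset ℕ} (hp : p.Prime)
    (hS : ∀ q ∈ S, q.Prime) (h : p ∣ ∏ q ∈ S, q ^ k) : p ∈ S := by
  obtain ⟨q, hq, hpq⟩ := hp.prime.dvd_finsetProd_iff _ |>.1 h
  rwa [(Nat.prime_dvd_prime_iff_eq hp (hS q hq)).1 (hp.dvd_of_dvd_pow hpq)]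

theorem Nat.primeFactors_subset_of_dvd_prod_pow {v k : ℕ} {S : Finset ℕ}
    (hS : ∀ q ∈ S, q.Prime) (h : v ∣ ∏ q ∈ S, q ^ k) : v.primeFactors ⊆ S := fun _ hp =>
  Nat.mem_of_prime_dvd_prod_pow (Nat.prime_of_mem_primeFactors hp) hS
    ((Nat.dvd_of_mem_primeFactors hp).trans h)

theorem Nat.prod_pow_factorization_of_primeFactors_subset {v : ℕ} {S : Finset ℕ} (hv : v ≠ 0)
    (hvS : v.primeFactors ⊆ S) : ∏ p ∈ S, p ^ v.factorization p = v := by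
  conv_rhs => rw [Nat.prod_primeFactors_pow_factorization hv]
  refine (prod_subset hvS fun p _ hp => ?_).symm
  rw [← Nat.support_factorization, Finsupp.notMem_support_iff] at hp
  rw [hp, pow_zero]

theorem Nat.dvd_prod_pow_of_primeFactors_subset {v k : ℕ} {S : Finset ℕ} (hv : v ≠ 0)
    (hvS : v.primeFactors ⊆ S) (hk : ∀ p, v.factorization p ≤ k) : v ∣ ∏ p ∈ S, p ^ k := by
  rw [← Nat.prod_pow_factorization_of_primeFactors_subset hv hvS]
  exact prod_dvd_prod_of_dvd _ _ fun p _ => Nat.pow_dvd_pow p (hk p)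

theorem Nat.sum_divisors_prime_pow_mul {M : Type*} [AddCommMonoid M] {q m : ℕ} (hq : q.Prime)
    (hqm : ¬ q ∣ m) (k : ℕ) (f : ℕ → M) :
    ∑ v ∈ (q ^ k * m).divisors, f v = ∑ j ∈ range (k + 1), ∑ w ∈ m.divisors, f (q ^ j * w) := by
  have hcop : (q ^ k).Coprime m := ((Nat.Prime.coprime_iff_not_dvd hq).2 hqm).pow_left k
  rw [hcop.divisors_mul, sum_map]
  refine (sum_attach _ fun x : ℕ × ℕ => f (x.1 * x.2)).trans ?_
  rw [sum_product, Nat.divisors_prime_pow hq, sum_map]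
  rfl

theorem prod_sum_range_eq_sum_divisors {R : Type*} [CommSemiring R] {S : Finset ℕ}
    (hS : ∀ p ∈ S, p.Prime) (k : ℕ) (G : ℕ → ℕ → R) :
    ∏ p ∈ S, ∑ b ∈ range (k + 1), G p b =
      ∑ v ∈ (∏ p ∈ S, p ^ k).divisors, ∏ p ∈ S, G p (v.factorization p) := by
  induction S using Finset.induction_on with
  | empty => simp
  | @insert q s hqs ih =>
    have hq : q.Prime := hS q (mem_insert_self q s)
    have hs : ∀ p ∈ s, p.Prime := fun p hp => hS p (mem_insert_of_mem hp)
    have hqQ : ¬ q ∣ ∏ p ∈ s, p ^ k := fun h => hqs (Nat.mem_of_prime_dvd_prod_pow hq hs h)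
    have hfact : ∀ j, ∀ w ∈ (∏ p ∈ s, p ^ k).divisors, ∀ p,
        (q ^ j * w).factorization p = if p = q then j else w.factorization p := by
      intro j w hw p
      have hqw : ¬ q ∣ w := fun h => hqQ (h.trans (Nat.dvd_of_mem_divisors hw))
      rw [Nat.factorization_mul (pow_ne_zero _ hq.ne_zero) (Nat.pos_of_mem_divisors hw).ne',
        Finsupp.add_apply, hq.factorization_pow]
      split_ifs with hpq
      · rw [hpq, Finsupp.single_eq_same, Nat.factorization_eq_zero_of_not_dvd hqw, add_zero]
      · rw [Finsupp.single_eq_of_ne hpq, zero_add]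
    rw [prod_insert hqs, prod_insert hqs, ih hs, sum_mul_sum, Nat.sum_divisors_prime_pow_mul hq hqQ]
    refine sum_congr rfl fun j _ => sum_congr rfl fun w hw => ?_
    rw [prod_insert hqs, hfact j w hw, if_pos rfl]
    congr 1
    refine prod_congr rfl fun p hp => ?_
    rw [hfact j w hw, if_neg (ne_of_mem_of_not_mem hp hqs)]

theorem Nat.mul_sq_mod_eight_of_not_two_dvd (d : ℕ) {m : ℕ} (hm : ¬ 2 ∣ m) :
    d * m ^ 2 % 8 = d % 8 := by
  have hm8 : m ^ 2 % 8 = 1 := by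
    rw [Nat.pow_mod]
    have := Nat.mod_lt m (show 8 > 0 by norm_num)
    interval_cases h : m % 8 <;> omega
  rw [Nat.mul_mod, hm8, mul_one, Nat.mod_mod]

theorem chiFn_prime (d : ℕ) {p : ℕ} (hp : p.Prime) : chiFn d p = chiP d p := by
  rw [chiFn, if_neg hp.ne_zero, hp.factorization, Finsupp.prod_single_index (by rw [pow_zero]),
    pow_one]

theorem chiP_mul_sq (d : ℕ) {m p : ℕ} (hp : p.Prime) (hm : ¬ p ∣ m) :
    chiP (d * m ^ 2) p = chiP d p := by
  rcases eq_or_ne p 2 with rfl | hp2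
  · simp only [chiP, if_true, Nat.mul_sq_mod_eight_of_not_two_dvd d hm]
  have hdvd : p ∣ d * m ^ 2 ↔ p ∣ d :=
    ⟨fun h => (hp.dvd_mul.1 h).resolve_right (mt hp.dvd_of_dvd_pow hm), fun h => h.mul_right _⟩
  have := Fact.mk hp
  have hm0 : (m : ZMod p) ≠ 0 := by rwa [Ne, ZMod.natCast_eq_zero_iff]
  have hsq : (∃ x : ZMod p, x ^ 2 = ((d * m ^ 2 : ℕ) : ZMod p)) ↔ ∃ x : ZMod p, x ^ 2 = d := by
    push_cast
    constructor
    · rintro ⟨x, hx⟩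
      exact ⟨x / m, by rw [div_pow, hx, mul_div_cancel_right₀ _ (pow_ne_zero 2 hm0)]⟩
    · rintro ⟨x, hx⟩
      exact ⟨x * m, by rw [mul_pow, hx]⟩
  simp only [chiP, if_neg hp2, hdvd, hsq]
  congr

theorem sq_sub_four_ne_zero {n : ℕ} (hn : 2 < n) : n ^ 2 - 4 ≠ 0 := by
  have : 9 ≤ n ^ 2 := by nlinarith
  omega

theorem not_isSquare_sq_sub_four {n : ℕ} (hn : 2 < n) : ¬ IsSquare (n ^ 2 - 4) := by
  rintro ⟨k, hk⟩
  have h9 : 9 ≤ n ^ 2 := by nlinarith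
  have hk' : k * k + 4 = n ^ 2 := by omega
  have hkn : k < n := by nlinarith
  nlinarith

theorem mem_primesLe {P : ℝ} (hP : 0 ≤ P) {p : ℕ} : p ∈ primesLe P ↔ p.Prime ∧ (p : ℝ) ≤ P := by
  rw [primesLe, mem_filter, mem_range, Nat.lt_succ_iff, Nat.le_floor_iff hP, and_comm]

section Local

variable {N v p : ℕ}

theorem div_pow_two_mul_factorization (hp : p.Prime) (hv : v ^ 2 ∣ N) :
    N / p ^ (2 * v.factorization p) = N / v ^ 2 * (ordCompl[p] v) ^ 2 := by
  refine Nat.div_eq_of_eq_mul_left (pow_pos hp.pos _) ?_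
  calc N = N / v ^ 2 * (ordProj[p] v * ordCompl[p] v) ^ 2 := by
        rw [Nat.ordProj_mul_ordCompl_eq_self, Nat.div_mul_cancel hv]
    _ = _ := by ring

theorem chiFn_div_pow_two_mul_factorization (hp : p.Prime) (hv0 : v ≠ 0) (hv : v ^ 2 ∣ N) :
    chiFn (N / p ^ (2 * v.factorization p)) p = chiFn (N / v ^ 2) p := by
  rw [chiFn_prime _ hp, chiFn_prime _ hp, div_pow_two_mul_factorization hp hv,
    chiP_mul_sq _ hp (Nat.not_dvd_ordCompl hp hv0)]

theorem div_two_pow_two_mul_factorization_mod_four (hv0 : v ≠ 0) (hv : v ^ 2 ∣ N) :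
    N / 2 ^ (2 * v.factorization 2) % 4 = N / v ^ 2 % 4 := by
  have := Nat.mul_sq_mod_eight_of_not_two_dvd (N / v ^ 2) (Nat.not_dvd_ordCompl Nat.prime_two hv0)
  rw [div_pow_two_mul_factorization Nat.prime_two hv]
  omega

end Local

/-- `I_v(n) = 1` for an arbitrary `v`: the condition for `(n² - 4) / v²` to be a discriminant. -/
def Ivcond (v n : ℕ) : Prop :=
  v ^ 2 ∣ n ^ 2 - 4 ∧ ((n ^ 2 - 4) / v ^ 2 % 4 = 0 ∨ (n ^ 2 - 4) / v ^ 2 % 4 = 1)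

def betaLocTerm (p n b : ℕ) : ℝ :=
  if Icond p b n then
    (1 / (p : ℝ) ^ b) * (1 - (chiFn ((n ^ 2 - 4) / p ^ (2 * b)) p : ℝ) / p)⁻¹ else 0

section Multiplicativity

variable {S : Finset ℕ} {v n : ℕ}

theorem forall_Icond_iff_Ivcond (hS : ∀ p ∈ S, p.Prime) (h2S : 2 ∈ S) (hv0 : v ≠ 0)
    (hvS : v.primeFactors ⊆ S) (hn : 2 < n) :
    (∀ p ∈ S, Icond p (v.factorization p) n) ↔ Ivcond v n := by
  have hN := sq_sub_four_ne_zero hn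
  have hsq : v ^ 2 ∣ n ^ 2 - 4 ↔ ∀ p ∈ S, p ^ (2 * v.factorization p) ∣ n ^ 2 - 4 := by
    rw [← Nat.factorization_le_iff_dvd (pow_ne_zero 2 hv0) hN, Nat.factorization_pow]
    refine ⟨fun h p hp => ((hS p hp).pow_dvd_iff_le_factorization hN).2 (h p), fun h p => ?_⟩
    by_cases hp : p ∈ S
    · exact ((hS p hp).pow_dvd_iff_le_factorization hN).1 (h p hp)
    · have hvp : v.factorization p = 0 := by
        rw [← Finsupp.notMem_support_iff, Nat.support_factorization]
        exact fun h => hp (hvS h)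
      simp [hvp]
  constructor
  · intro h
    have hv : v ^ 2 ∣ n ^ 2 - 4 := hsq.2 fun p hp => (h p hp).1
    exact ⟨hv, div_two_pow_two_mul_factorization_mod_four hv0 hv ▸ (h 2 h2S).2 rfl⟩
  · rintro ⟨hv, hmod⟩ p hp
    refine ⟨hsq.1 hv p hp, ?_⟩
    rintro rfl
    rwa [div_two_pow_two_mul_factorization_mod_four hv0 hv]

theorem prod_betaLocTerm_factorization (hS : ∀ p ∈ S, p.Prime) (h2S : 2 ∈ S) (hv0 : v ≠ 0)
    (hvS : v.primeFactors ⊆ S) (hn : 2 < n) :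
    ∏ p ∈ S, betaLocTerm p n (v.factorization p) =
      if Ivcond v n then
        (1 / v : ℝ) * ∏ p ∈ S, (1 - (chiFn ((n ^ 2 - 4) / v ^ 2) p : ℝ) / p)⁻¹ else 0 := by
  have hI := forall_Icond_iff_Ivcond hS h2S hv0 hvS hn
  split_ifs with h
  · have hv : v ^ 2 ∣ n ^ 2 - 4 := h.1
    have hprod : ∏ p ∈ S, (p : ℝ) ^ v.factorization p = v := by
      exact_mod_cast Nat.prod_pow_factorization_of_primeFactors_subset hv0 hvS
    rw [← hprod, one_div, ← prod_inv_distrib, ← prod_mul_distrib]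
    refine prod_congr rfl fun p hp => ?_
    rw [betaLocTerm, if_pos (hI.2 h p hp), chiFn_div_pow_two_mul_factorization (hS p hp) hv0 hv,
      one_div]
  · obtain ⟨p, hp, hpI⟩ := not_forall₂.1 (mt hI.1 h)
    exact prod_eq_zero hp (if_neg hpI)

end Multiplicativity

theorem betaLoc_eq_sum_range {p n : ℕ} (hp : 2 ≤ p) (hn : 2 < n) :
    betaLoc p n = ∑ b ∈ range (n ^ 2 - 4 + 1), betaLocTerm p n b := by
  rw [betaLoc, if_pos hn]
  refine tsum_eq_sum (f := betaLocTerm p n) fun b hb => if_neg fun h => hb ?_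
  have := Nat.lt_of_pow_dvd_right (sq_sub_four_ne_zero hn) hp h.1
  rw [mem_range]
  omega

theorem betaPFn_eq_sum_divisors {P : ℝ} (hP : 0 ≤ P) {n : ℕ} (hn : 2 < n) :
    betaPFn P n = ∑ v ∈ (∏ p ∈ primesLe P, p ^ (n ^ 2 - 4)).divisors,
      if Ivcond v n then
        (1 / v : ℝ) * ∏ p ∈ primesLe P, (1 - (chiFn ((n ^ 2 - 4) / v ^ 2) p : ℝ) / p)⁻¹
      else 0 := by
  have hN := sq_sub_four_ne_zero hn
  have hS : ∀ p ∈ primesLe P, p.Prime := fun p hp => ((mem_primesLe hP).1 hp).1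
  have hQ : ∏ p ∈ primesLe P, p ^ (n ^ 2 - 4) ≠ 0 :=
    prod_ne_zero_iff.2 fun p hp => pow_ne_zero _ (hS p hp).ne_zero
  rw [betaPFn, if_pos hn, ← sum_filter, ← sum_image (g := fun v => ((n ^ 2 - 4) / v ^ 2, v))
    (f := fun dv : ℕ × ℕ => (1 / dv.2 : ℝ) * ∏ p ∈ primesLe P, (1 - (chiFn dv.1 p : ℝ) / p)⁻¹)
    fun _ _ _ _ h => congrArg Prod.snd h, ← finsum_mem_coe_finset]
  refine finsum_mem_congr ?_ fun _ _ => rfl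
  ext ⟨d, v⟩
  simp only [Set.mem_ofPred_eq, coe_image, Set.mem_image, mem_coe, mem_filter, Nat.mem_divisors,
    Prod.mk.injEq]
  constructor
  · rintro ⟨hd, hv, hdv, hsmooth⟩
    have hvN : v ^ 2 ∣ n ^ 2 - 4 := Dvd.intro_left d hdv
    have hdiv : (n ^ 2 - 4) / v ^ 2 = d := Nat.div_eq_of_eq_mul_left (by positivity) hdv.symm
    refine ⟨v, ⟨⟨Nat.dvd_prod_pow_of_primeFactors_subset hv.ne' (fun p hp => ?_) fun p => ?_, hQ⟩,
      hvN, hdiv ▸ hd.2.1⟩, hdiv, rfl⟩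
    · have hpp := Nat.prime_of_mem_primeFactors hp
      exact (mem_primesLe hP).2 ⟨hpp, hsmooth p hpp (Nat.dvd_of_mem_primeFactors hp)⟩
    · by_cases hp : p.Prime
      · exact (Nat.lt_of_pow_dvd_right hN hp.two_le
          ((Nat.ordProj_dvd v p).trans ((dvd_pow_self v two_ne_zero).trans hvN))).le
      · simp [Nat.factorization_eq_zero_of_not_prime v hp]
  · rintro ⟨v, ⟨⟨hvQ, -⟩, hvN, hmod⟩, rfl, rfl⟩
    have hv : 0 < v := Nat.pos_of_ne_zero (ne_zero_of_dvd_ne_zero hQ hvQ)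
    refine ⟨⟨Nat.div_pos (Nat.le_of_dvd (Nat.pos_of_ne_zero hN) hvN) (by positivity), hmod, ?_⟩,
      hv, Nat.div_mul_cancel hvN, fun p hp hpv => ?_⟩
    · rintro ⟨k, hk⟩
      exact not_isSquare_sq_sub_four hn ⟨k * v, by rw [← Nat.div_mul_cancel hvN, hk]; ring⟩
    · exact ((mem_primesLe hP).1 (Nat.mem_of_prime_dvd_prod_pow hp hS (hpv.trans hvQ))).2

/-- For every `P ≥ 2` and every `n > 2`, `β_P(n) = ∏_{p ≤ P} β_{(p)}(n)`. -/
theorem betaP_eq_prod_betaLoc (P : ℝ) (hP : 2 ≤ P) (n : ℕ) (hn : 2 < n) :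
    betaPFn P n = ∏ p ∈ primesLe P, betaLoc p n := by
  have hS : ∀ p ∈ primesLe P, p.Prime := fun p hp => ((mem_primesLe (by linarith)).1 hp).1
  have h2S : 2 ∈ primesLe P := (mem_primesLe (by linarith)).2 ⟨Nat.prime_two, by exact_mod_cast hP⟩
  rw [prod_congr rfl fun p hp => betaLoc_eq_sum_range (hS p hp).two_le hn,
    prod_sum_range_eq_sum_divisors hS, betaPFn_eq_sum_divisors (by linarith) hn]
  refine sum_congr rfl fun v hv => (prod_betaLocTerm_factorization hS h2S
    (Nat.pos_of_mem_divisors hv).ne' ?_ hn).symm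
  exact Nat.primeFactors_subset_of_dvd_prod_pow hS (Nat.dvd_of_mem_divisors hv)

end
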